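/- The polynomial PP₁₁(t) = (t+1)²(t+1/2)(t+1/3)(t+1/6)²·t²·(t−1/6)²(t−1/3) is positive definite on S^{47}: for every positive integer m, all points x₁, …, x_m on the unit sphere of EuclideanSpace ℝ (Fin 48), and all reals c₁, …, c_m, one has ∑_{i,j=1}^{m} c_i c_j · PP₁₁(⟨x_i, x_j⟩) ≥ 0. -/

import Mathlib

/-- The eleventh partial product of the Newton form at the `T₂` node multiset. -/
noncomputable def PP11 (t : ℝ) : ℝ :=
  (t + 1) ^ 2 * (t + 1/2) * (t + 1/3) * (t + 1/6) ^ 2 * t ^ 2 *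
    (t - 1/6) ^ 2 * (t - 1/3)

/-!
For a unit vector `v ∈ ℝⁿ` and `k : ℕ`, the polynomial
`Z_v(z) = ∑ⱼ aⱼ ‖z‖^{2j} ⟪v, z⟫^{k-2j}` with `a₀ = 1` is harmonic exactly when the `aⱼ` satisfy a
two-term recurrence; its restriction to the sphere is then `G_k(⟪v, ·⟫)`, with `G_k` the monic
Gegenbauer polynomial of the sphere `S^{n-1}`. In the Fischer inner product
`⟪p, q⟫ = ∑_α α! p_α q_α`, multiplication by `X i` is adjoint to `∂ᵢ`, so multiples of `‖z‖²` are
orthogonal to harmonic polynomials and `⟪⟪u, z⟫^k, q⟫ = k! q(u)` for `q` homogeneous of degree `k`.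
Hence `⟪Z_u, Z_v⟫ = k! G_k(⟪u, v⟫)`: the kernel `G_k(⟪x, y⟫)` is a Gram kernel, hence positive
definite on the sphere. Finally, `PP11` is a nonnegative combination of `G_0, …, G_11` in
dimension `48`.
-/

open MvPolynomial Finset
open scoped Nat

noncomputable section

/-- The recurrence is the harmonicity condition of `MvPolynomial.laplacian_zonalHarmonic`; up to a
positive factor, `gegenbauer n k` is the Gegenbauer polynomial `C_k^{(n-2)/2}`. -/
def gegenbauerCoeff (n k : ℕ) : ℕ → ℝ
  | 0 => 1
  | j + 1 => -(((k - 2 * j) * (k - 2 * j - 1) : ℕ) : ℝ) /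
      ((2 * (j + 1) * (n + 2 * j + 2 * (k - 2 * (j + 1))) : ℕ) : ℝ) * gegenbauerCoeff n k j

lemma gegenbauerCoeff_succ_mul_add {n : ℕ} (hn : 0 < n) (k j : ℕ) :
    gegenbauerCoeff n k (j + 1) * ((2 * (j + 1) * (n + 2 * j + 2 * (k - 2 * (j + 1))) : ℕ) : ℝ) +
      gegenbauerCoeff n k j * (((k - 2 * j) * (k - 2 * j - 1) : ℕ) : ℝ) = 0 := by
  have : ((2 * (j + 1) * (n + 2 * j + 2 * (k - 2 * (j + 1))) : ℕ) : ℝ) ≠ 0 := by positivity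
  rw [gegenbauerCoeff]
  field_simp
  ring

def gegenbauer (n k : ℕ) (t : ℝ) : ℝ :=
  ∑ j ∈ range (k / 2 + 1), gegenbauerCoeff n k j * t ^ (k - 2 * j)

namespace MvPolynomial

variable {σ : Type*} [Fintype σ]

def fischerWeight (α : σ →₀ ℕ) : ℝ := ∏ i, ((α i)! : ℝ)

lemma fischerWeight_pos (α : σ →₀ ℕ) : 0 < fischerWeight α :=
  prod_pos fun i _ => mod_cast (α i).factorial_pos

lemma fischerWeight_zero : fischerWeight (0 : σ →₀ ℕ) = 1 := by
  simp [fischerWeight]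

lemma fischerWeight_single_add (i : σ) (α : σ →₀ ℕ) :
    fischerWeight (Finsupp.single i 1 + α) = (α i + 1) * fischerWeight α := by
  classical
  have h (j : σ) : (((Finsupp.single i 1 + α : σ →₀ ℕ) j)! : ℝ) =
      (if i = j then (α i + 1 : ℝ) else 1) * (α j)! := by
    by_cases hj : i = j
    · subst hj; simp [add_comm 1, Nat.factorial_succ]
    · simp [hj]
  simp only [fischerWeight, h, prod_mul_distrib, prod_ite_eq, mem_univ, if_true]

lemma sum_support_fischerWeight_eq {p : MvPolynomial σ ℝ} {s : Finset (σ →₀ ℕ)}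
    (hs : p.support ⊆ s) (q : MvPolynomial σ ℝ) :
    ∑ α ∈ p.support, fischerWeight α * p.coeff α * q.coeff α =
      ∑ α ∈ s, fischerWeight α * p.coeff α * q.coeff α :=
  sum_subset hs fun α _ hα => by simp [notMem_support_iff.mp hα]

def fischer : MvPolynomial σ ℝ →ₗ[ℝ] MvPolynomial σ ℝ →ₗ[ℝ] ℝ := by
  classical
  exact LinearMap.mk₂ ℝ (fun p q => ∑ α ∈ p.support, fischerWeight α * p.coeff α * q.coeff α)
    (fun p₁ p₂ q => by
      rw [sum_support_fischerWeight_eq support_add, sum_support_fischerWeight_eq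
        subset_union_left, sum_support_fischerWeight_eq subset_union_right, ← sum_add_distrib]
      exact sum_congr rfl fun _ _ => by simp only [coeff_add]; ring)
    (fun a p q => by
      rw [sum_support_fischerWeight_eq support_smul, smul_eq_mul, mul_sum]
      exact sum_congr rfl fun _ _ => by simp only [coeff_smul, smul_eq_mul]; ring)
    (fun p q₁ q₂ => by
      rw [← sum_add_distrib]; exact sum_congr rfl fun _ _ => by simp only [coeff_add]; ring)
    (fun a p q => by
      rw [smul_eq_mul, mul_sum]
      exact sum_congr rfl fun _ _ => by simp only [coeff_smul, smul_eq_mul]; ring)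

lemma fischer_apply (p q : MvPolynomial σ ℝ) :
    fischer p q = ∑ α ∈ p.support, fischerWeight α * p.coeff α * q.coeff α := rfl

lemma fischer_self_nonneg (p : MvPolynomial σ ℝ) : 0 ≤ fischer p p :=
  sum_nonneg fun α _ => by
    rw [mul_assoc]; exact mul_nonneg (fischerWeight_pos α).le (mul_self_nonneg _)

lemma fischer_one (q : MvPolynomial σ ℝ) : fischer 1 q = q.coeff 0 := by
  classical
  simp [fischer_apply, support_one, fischerWeight_zero]

lemma fischer_X_mul (i : σ) (p q : MvPolynomial σ ℝ) :
    fischer (X i * p) q = fischer p (pderiv i q) := by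
  classical
  rw [fischer_apply, fischer_apply, support_X_mul, sum_map]
  refine sum_congr rfl fun α _ => ?_
  simp only [addLeftEmbedding_apply, coeff_X_mul, fischerWeight_single_add, coeff_pderiv]
  rw [add_comm (Finsupp.single i 1)]
  ring

def laplacian : MvPolynomial σ ℝ →ₗ[ℝ] MvPolynomial σ ℝ :=
  ∑ i, (pderiv i).toLinearMap ∘ₗ (pderiv i).toLinearMap

lemma laplacian_apply (q : MvPolynomial σ ℝ) : laplacian q = ∑ i, pderiv i (pderiv i q) := by
  simp [laplacian]

def linearForm (v : σ → ℝ) : MvPolynomial σ ℝ := ∑ i, C (v i) * X i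

lemma eval_linearForm (u v : σ → ℝ) : eval u (linearForm v) = ∑ i, v i * u i := by
  simp [linearForm]

lemma pderiv_linearForm (i : σ) (v : σ → ℝ) : pderiv i (linearForm v) = C (v i) := by
  classical
  simp [linearForm, pderiv_X, Pi.single_apply]

lemma pderiv_psum_two (i : σ) : pderiv i (psum σ ℝ 2) = 2 * X i := by
  classical
  simp [psum, pderiv_X, Pi.single_apply]

lemma eval_psum_two (u : σ → ℝ) : eval u (psum σ ℝ 2) = ∑ i, u i ^ 2 := by
  simp [psum]

lemma fischer_psum_two_mul (p q : MvPolynomial σ ℝ) :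
    fischer (psum σ ℝ 2 * p) q = fischer p (laplacian q) := by
  simp [psum, sum_mul, laplacian_apply, pow_two, mul_assoc, fischer_X_mul]

lemma fischer_linearForm_mul (v : σ → ℝ) (p q : MvPolynomial σ ℝ) :
    fischer (linearForm v * p) q = ∑ i, v i * fischer p (pderiv i q) := by
  simp [linearForm, sum_mul, fischer_X_mul, ← smul_eq_C_mul]

lemma fischer_linearForm_pow {k : ℕ} {q : MvPolynomial σ ℝ} (hq : q.IsHomogeneous k)
    (v : σ → ℝ) : fischer (linearForm v ^ k) q = k ! * eval v q := by
  induction k generalizing q with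
  | zero =>
    rw [← totalDegree_zero_iff_isHomogeneous, totalDegree_eq_zero_iff_eq_C] at hq
    rw [hq]
    simp [fischer_one]
  | succ k ih =>
    have euler := congrArg (eval v) hq.sum_X_mul_pderiv
    simp only [map_sum, map_mul, eval_X, nsmul_eq_mul, map_natCast] at euler
    rw [pow_succ', fischer_linearForm_mul]
    simp only [fun i => ih (hq.pderiv (i := i))]
    rw [Nat.factorial_succ, Nat.cast_mul, mul_right_comm, ← euler, sum_mul]
    exact sum_congr rfl fun i _ => by ring

lemma laplacian_mul (f g : MvPolynomial σ ℝ) :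
    laplacian (f * g) = laplacian f * g + 2 * ∑ i, pderiv i f * pderiv i g + f * laplacian g := by
  simp only [laplacian_apply, pderiv_mul, map_add, mul_sum, sum_mul, ← sum_add_distrib]
  exact sum_congr rfl fun i _ => by ring

lemma isHomogeneous_psum_two : (psum σ ℝ 2).IsHomogeneous 2 :=
  IsHomogeneous.sum _ _ _ fun i _ => isHomogeneous_X_pow i 2

lemma isHomogeneous_linearForm (v : σ → ℝ) : (linearForm v).IsHomogeneous 1 :=
  IsHomogeneous.sum _ _ _ fun i _ => isHomogeneous_C_mul_X (v i) i

lemma pderiv_psum_two_pow (i : σ) (j : ℕ) :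
    pderiv i (psum σ ℝ 2 ^ j) = ((2 * j : ℕ) : MvPolynomial σ ℝ) * psum σ ℝ 2 ^ (j - 1) * X i := by
  rw [pderiv_pow, pderiv_psum_two]; push_cast; ring

lemma laplacian_psum_two_pow (j : ℕ) :
    laplacian (psum σ ℝ 2 ^ j) =
      ((2 * j * (Fintype.card σ + 2 * (j - 1)) : ℕ) : MvPolynomial σ ℝ) * psum σ ℝ 2 ^ (j - 1) := by
  set c : MvPolynomial σ ℝ := ((2 * j : ℕ) : MvPolynomial σ ℝ)
  have euler := (isHomogeneous_psum_two.pow (j - 1)).sum_X_mul_pderiv (σ := σ)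
  calc laplacian (psum σ ℝ 2 ^ j)
      = ∑ i, (c * (X i * pderiv i (psum σ ℝ 2 ^ (j - 1))) + c * psum σ ℝ 2 ^ (j - 1)) := by
        rw [laplacian_apply]
        refine sum_congr rfl fun i _ => ?_
        simp only [pderiv_psum_two_pow, pderiv_mul, pderiv_X_self, c, Derivation.map_natCast]
        ring
    _ = c * ∑ i, X i * pderiv i (psum σ ℝ 2 ^ (j - 1)) +
          Fintype.card σ • (c * psum σ ℝ 2 ^ (j - 1)) := by
        rw [sum_add_distrib, mul_sum, sum_const, card_univ]
    _ = _ := by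
        rw [euler, nsmul_eq_mul, nsmul_eq_mul]; simp only [c]; push_cast; ring

lemma laplacian_linearForm_pow (v : σ → ℝ) (m : ℕ) :
    laplacian (linearForm v ^ m) =
      ((m * (m - 1) : ℕ) : MvPolynomial σ ℝ) * C (∑ i, v i ^ 2) * linearForm v ^ (m - 2) := by
  simp only [laplacian_apply, pderiv_pow, pderiv_linearForm, pderiv_mul, pderiv_C,
    Derivation.map_natCast, map_sum, map_pow, mul_sum, sum_mul]
  refine sum_congr rfl fun i _ => ?_
  rw [Nat.sub_sub]; push_cast; ring

lemma sum_pderiv_psum_two_pow_mul_pderiv (j : ℕ) (q : MvPolynomial σ ℝ) {m : ℕ}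
    (hq : q.IsHomogeneous m) :
    ∑ i, pderiv i (psum σ ℝ 2 ^ j) * pderiv i q =
      ((2 * j * m : ℕ) : MvPolynomial σ ℝ) * psum σ ℝ 2 ^ (j - 1) * q := by
  simp only [pderiv_psum_two_pow, mul_assoc, ← mul_sum, hq.sum_X_mul_pderiv, nsmul_eq_mul]
  push_cast; ring

/-- The truncated exponents `j - 1` and `m - 2` are harmless: their coefficients vanish whenever
the subtraction truncates. -/
lemma laplacian_psum_two_pow_mul_linearForm_pow (v : σ → ℝ) (hv : ∑ i, v i ^ 2 = 1) (j m : ℕ) :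
    laplacian (psum σ ℝ 2 ^ j * linearForm v ^ m) =
      ((2 * j * (Fintype.card σ + 2 * (j - 1) + 2 * m) : ℕ) : MvPolynomial σ ℝ) *
          (psum σ ℝ 2 ^ (j - 1) * linearForm v ^ m) +
        ((m * (m - 1) : ℕ) : MvPolynomial σ ℝ) * (psum σ ℝ 2 ^ j * linearForm v ^ (m - 2)) := by
  rw [laplacian_mul, laplacian_psum_two_pow, laplacian_linearForm_pow, hv,
    sum_pderiv_psum_two_pow_mul_pderiv j _ ((isHomogeneous_linearForm v).pow m), map_one]
  push_cast; ring

def zonalHarmonic (k : ℕ) (v : σ → ℝ) : MvPolynomial σ ℝ :=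
  ∑ j ∈ range (k / 2 + 1),
    C (gegenbauerCoeff (Fintype.card σ) k j) * (psum σ ℝ 2 ^ j * linearForm v ^ (k - 2 * j))

lemma isHomogeneous_zonalHarmonic (k : ℕ) (v : σ → ℝ) : (zonalHarmonic k v).IsHomogeneous k :=
  IsHomogeneous.sum _ _ _ fun j hj => by
    have h := ((isHomogeneous_psum_two.pow j).mul
      ((isHomogeneous_linearForm v).pow (k - 2 * j))).C_mul (gegenbauerCoeff (Fintype.card σ) k j)
    convert h using 1
    have := mem_range.mp hj
    omega

lemma eval_zonalHarmonic (k : ℕ) {u : σ → ℝ} (hu : ∑ i, u i ^ 2 = 1) (v : σ → ℝ) :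
    eval u (zonalHarmonic k v) = gegenbauer (Fintype.card σ) k (∑ i, v i * u i) := by
  simp [zonalHarmonic, gegenbauer, eval_psum_two, hu, eval_linearForm]

lemma exists_zonalHarmonic_eq (k : ℕ) (v : σ → ℝ) :
    ∃ r, zonalHarmonic k v = linearForm v ^ k + psum σ ℝ 2 * r := by
  refine ⟨∑ j ∈ range (k / 2), C (gegenbauerCoeff (Fintype.card σ) k (j + 1)) *
    (psum σ ℝ 2 ^ j * linearForm v ^ (k - 2 * (j + 1))), ?_⟩
  rw [zonalHarmonic, sum_range_succ', mul_sum, add_comm]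
  simp only [gegenbauerCoeff, map_one, pow_zero, one_mul, mul_zero, Nat.sub_zero, pow_succ]
  congr 1
  exact sum_congr rfl fun j _ => by ring

lemma laplacian_zonalHarmonic (k : ℕ) {v : σ → ℝ} (hv : ∑ i, v i ^ 2 = 1) :
    laplacian (zonalHarmonic k v) = 0 := by
  have hn : 0 < Fintype.card σ := by
    rw [Fintype.card_pos_iff]
    by_contra h
    simp [not_nonempty_iff.mp h] at hv
  set a := gegenbauerCoeff (Fintype.card σ) k with ha
  have hterm (j : ℕ) : laplacian (C (a j) * (psum σ ℝ 2 ^ j * linearForm v ^ (k - 2 * j))) =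
      C (a j * ((2 * j * (Fintype.card σ + 2 * (j - 1) + 2 * (k - 2 * j)) : ℕ) : ℝ)) *
          (psum σ ℝ 2 ^ (j - 1) * linearForm v ^ (k - 2 * j)) +
        C (a j * (((k - 2 * j) * (k - 2 * j - 1) : ℕ) : ℝ)) *
          (psum σ ℝ 2 ^ j * linearForm v ^ (k - 2 * j - 2)) := by
    rw [← smul_eq_C_mul, map_smul, laplacian_psum_two_pow_mul_linearForm_pow v hv]
    simp only [smul_add, smul_eq_C_mul, map_mul, map_natCast]
    ring
  -- the last term has degree at most one in `linearForm v`, so its second part vanishes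
  have hlast : ((k - 2 * (k / 2)) * (k - 2 * (k / 2) - 1) : ℕ) = 0 :=
    Nat.mul_eq_zero.mpr (by omega)
  rw [zonalHarmonic, map_sum]
  simp only [← ha, hterm, sum_add_distrib]
  rw [sum_range_succ', sum_range_succ _ (k / 2), hlast]
  simp only [mul_zero, zero_mul, Nat.cast_zero, map_zero, add_zero, ← sum_add_distrib]
  refine sum_eq_zero fun j _ => ?_
  rw [show k - 2 * j - 2 = k - 2 * (j + 1) by omega, Nat.add_sub_cancel, ← add_mul, ← map_add,
    gegenbauerCoeff_succ_mul_add hn, map_zero, zero_mul]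

lemma fischer_zonalHarmonic (k : ℕ) {u v : σ → ℝ} (hu : ∑ i, u i ^ 2 = 1)
    (hv : ∑ i, v i ^ 2 = 1) :
    fischer (zonalHarmonic k u) (zonalHarmonic k v) =
      k ! * gegenbauer (Fintype.card σ) k (∑ i, v i * u i) := by
  obtain ⟨r, hr⟩ := exists_zonalHarmonic_eq k u
  rw [hr, map_add, LinearMap.add_apply, fischer_psum_two_mul, laplacian_zonalHarmonic k hv,
    map_zero, add_zero, fischer_linearForm_pow (isHomogeneous_zonalHarmonic k v),
    eval_zonalHarmonic k hu]

end MvPolynomial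

def IsPosDefOnUnitSphere (E : Type*) [NormedAddCommGroup E] [InnerProductSpace ℝ E]
    (f : ℝ → ℝ) : Prop :=
  ∀ (m : ℕ) (x : Fin m → E), (∀ i, ‖x i‖ = 1) → ∀ c : Fin m → ℝ,
    0 ≤ ∑ i, ∑ j, c i * c j * f (inner ℝ (x i) (x j))

lemma IsPosDefOnUnitSphere.sum {E ι : Type*} [NormedAddCommGroup E] [InnerProductSpace ℝ E]
    (s : Finset ι) {w : ι → ℝ} {f : ι → ℝ → ℝ} (hw : ∀ k ∈ s, 0 ≤ w k)
    (hf : ∀ k ∈ s, IsPosDefOnUnitSphere E (f k)) :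
    IsPosDefOnUnitSphere E fun t => ∑ k ∈ s, w k * f k t := by
  intro m x hx c
  have hswap : ∑ i, ∑ j, c i * c j * ∑ k ∈ s, w k * f k (inner ℝ (x i) (x j)) =
      ∑ k ∈ s, w k * ∑ i, ∑ j, c i * c j * f k (inner ℝ (x i) (x j)) := by
    calc _ = ∑ i, ∑ k ∈ s, ∑ j, w k * (c i * c j * f k (inner ℝ (x i) (x j))) := by
          refine sum_congr rfl fun i _ => ?_
          simp only [mul_sum]
          rw [sum_comm]
          exact sum_congr rfl fun k _ => sum_congr rfl fun j _ => by ring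
      _ = _ := by rw [sum_comm]; simp only [mul_sum]
  rw [hswap]
  exact sum_nonneg fun k hk => mul_nonneg (hw k hk) (hf k hk m x hx c)

theorem isPosDefOnUnitSphere_gegenbauer (σ : Type*) [Fintype σ] (k : ℕ) :
    IsPosDefOnUnitSphere (EuclideanSpace ℝ σ) (gegenbauer (Fintype.card σ) k) := by
  intro m x hx c
  have hunit (i : Fin m) : ∑ l, x i l ^ 2 = 1 := by
    rw [← EuclideanSpace.real_norm_sq_eq, hx, one_pow]
  have hgram (i j : Fin m) : fischer (zonalHarmonic k ⇑(x i)) (zonalHarmonic k ⇑(x j)) =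
      k ! * gegenbauer (Fintype.card σ) k (inner ℝ (x j) (x i)) := by
    rw [fischer_zonalHarmonic k (hunit i) (hunit j), PiLp.inner_apply]
    simp [mul_comm]
  have h := fischer_self_nonneg (∑ i, c i • zonalHarmonic k ⇑(x i))
  simp only [map_sum, map_smul, LinearMap.sum_apply, LinearMap.smul_apply, hgram, smul_eq_mul] at h
  have hfactor :
      ∑ i, c i * ∑ j, c j * (k ! * gegenbauer (Fintype.card σ) k (inner ℝ (x i) (x j))) =
      k ! * ∑ i, ∑ j, c i * c j * gegenbauer (Fintype.card σ) k (inner ℝ (x i) (x j)) := by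
    simp only [mul_sum]
    exact sum_congr rfl fun i _ => sum_congr rfl fun j _ => by ring
  rw [hfactor] at h
  exact (mul_nonneg_iff_of_pos_left (by positivity)).mp h

/-- The Gegenbauer coefficients of `PP11` in dimension `48`, obtained by eliminating from the top
degree down. -/
def PP11GegenbauerWeights : Fin 12 → ℝ :=
  ![511 / 181958400, 40103 / 586310400, 6979 / 8794656, 857549 / 146126592,
    1188979 / 37884672, 13305061 / 104859360, 5897 / 14880, 17635 / 17856, 707 / 384, 8 / 3,
    5 / 2, 1]

lemma PP11_eq_sum_gegenbauer (t : ℝ) :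
    PP11 t = ∑ k : Fin 12, PP11GegenbauerWeights k * gegenbauer 48 k t := by
  norm_num [PP11, PP11GegenbauerWeights, gegenbauer, gegenbauerCoeff, Fin.sum_univ_succ,
    sum_range_succ]
  ring

lemma PP11GegenbauerWeights_nonneg (k : Fin 12) : 0 ≤ PP11GegenbauerWeights k := by
  fin_cases k <;> norm_num [PP11GegenbauerWeights]

end

theorem PP11_T2_positive_definite_general (m : ℕ)
    (x : Fin m → EuclideanSpace ℝ (Fin 48)) (hx : ∀ i, ‖x i‖ = 1)
    (c : Fin m → ℝ) :
    0 ≤ ∑ i : Fin m, ∑ j : Fin m, c i * c j * PP11 (inner ℝ (x i) (x j) : ℝ) := by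
  have hPD : IsPosDefOnUnitSphere (EuclideanSpace ℝ (Fin 48)) PP11 := by
    rw [show PP11 = _ from funext PP11_eq_sum_gegenbauer]
    refine IsPosDefOnUnitSphere.sum univ (fun k _ => PP11GegenbauerWeights_nonneg k) fun k _ => ?_
    simpa using isPosDefOnUnitSphere_gegenbauer (Fin 48) k
  exact hPD m x hx c

theorem PP11_T2_positive_definite (m : ℕ) (hm : 1 ≤ m)
    (x : Fin m → EuclideanSpace ℝ (Fin 48)) (hx : ∀ i, ‖x i‖ = 1)
    (c : Fin m → ℝ) :
    0 ≤ ∑ i : Fin m, ∑ j : Fin m, c i * c j * PP11 (inner ℝ (x i) (x j) : ℝ) :=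
  PP11_T2_positive_definite_general m x hx c
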